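/- arXiv:1610.05445 — 3 statements merged into one kernel-verified Lean document; each statement's English description precedes it below -/
import Mathlib

section
/- Let h : ℕ → ℕ be a strictly increasing sequence of positive naturals satisfying the apartness condition: for all i < j, μ(h i) < λ(h j), where λ is the 2-adic valuation and μ(n) = ⌊log₂ n⌋. Then for all i ≤ j, λ(h i + h (i+1) + ... + h j) = λ(h i) and μ(h i + ... + h j) = μ(h j). -/
/-- λ(n): the 2-adic valuation of n (least exponent in binary expansion). -/
def lam (n : ℕ) : ℕ := padicValNat 2 n

/-- μ(n): ⌊log₂ n⌋ (greatest exponent in binary expansion). -/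
def mu (n : ℕ) : ℕ := Nat.log 2 n

/-- Apartness condition for a sequence. -/
def Apart (h : ℕ → ℕ) : Prop := ∀ i j, i < j → mu (h i) < lam (h j)

/-- Sum of adjacent elements h i + h (i+1) + ... + h j. -/
def adjSum (h : ℕ → ℕ) (i j : ℕ) : ℕ := ∑ t ∈ Finset.Icc i j, h t

/-!
If `μ(a) < λ(b)`, then `a < 2^λ(b)` while `b` is a multiple of `2^λ(b)`: adding `a` to `b` only
fills in binary digits strictly between those of the two numbers, so `a + b` has the lowest digit
of `a` and the highest digit of `b`. Apartness makes each partial sum `h i + ⋯ + h j` apart from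
`h (j+1)`, and the theorem follows by induction on `j`.
-/

theorem padicValNat_add_of_lt {p a b : ℕ} [Fact p.Prime] (ha : a ≠ 0)
    (hab : padicValNat p a < padicValNat p b) : padicValNat p (a + b) = padicValNat p a := by
  have hb : b ≠ 0 := by
    rintro rfl
    simp at hab
  have hq := padicValRat.add_eq_of_lt (p := p) (q := a) (r := b) (by positivity)
    (by exact_mod_cast ha) (by exact_mod_cast hb) (by simpa [padicValRat.of_nat] using hab)
  rw [← Nat.cast_add, padicValRat.of_nat, padicValRat.of_nat] at hq
  exact_mod_cast hq

theorem Nat.log_add_of_lt_of_pow_dvd {c a b k : ℕ} (hc : 1 < c) (hb : b ≠ 0) (ha : a < c ^ k)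
    (hdvd : c ^ k ∣ b) : Nat.log c (a + b) = Nat.log c b := by
  set m := Nat.log c b
  have hb_lt : b < c ^ (m + 1) := Nat.lt_pow_succ_log_self hc b
  have hk : k ≤ m + 1 := by
    have := (Nat.le_of_dvd (Nat.pos_of_ne_zero hb) hdvd).trans_lt hb_lt
    exact ((Nat.pow_lt_pow_iff_right hc).mp this).le
  -- `b` and `c^(m+1)` are both multiples of `c^k`, so they are at least `c^k` apart.
  have hgap : b + c ^ k ≤ c ^ (m + 1) := by
    by_contra! hlt
    have := Nat.le_of_lt_add_of_dvd hlt (pow_dvd_pow c hk) hdvd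
    omega
  refine (Nat.log_eq_iff (Or.inr ⟨hc, by omega⟩)).mpr ⟨?_, by omega⟩
  exact (Nat.pow_log_le_self c hb).trans (Nat.le_add_left b a)

theorem lam_le_mu {n : ℕ} (hn : n ≠ 0) : lam n ≤ mu n :=
  Nat.le_log_of_pow_le one_lt_two (Nat.le_of_dvd (Nat.pos_of_ne_zero hn) pow_padicValNat_dvd)

theorem lam_add_of_mu_lt_lam {a b : ℕ} (ha : a ≠ 0) (hab : mu a < lam b) :
    lam (a + b) = lam a :=
  padicValNat_add_of_lt ha ((lam_le_mu ha).trans_lt hab)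

theorem mu_add_of_mu_lt_lam {a b : ℕ} (hab : mu a < lam b) : mu (a + b) = mu b := by
  have hb : b ≠ 0 := by
    rintro rfl
    simp [lam] at hab
  refine Nat.log_add_of_lt_of_pow_dvd one_lt_two hb ?_ pow_padicValNat_dvd
  exact (Nat.lt_pow_succ_log_self one_lt_two a).trans_le (Nat.pow_le_pow_right two_pos hab)

theorem adjSum_self (h : ℕ → ℕ) (i : ℕ) : adjSum h i i = h i := by
  simp [adjSum]

theorem adjSum_succ (h : ℕ → ℕ) {i j : ℕ} (hij : i ≤ j + 1) :
    adjSum h i (j + 1) = adjSum h i j + h (j + 1) :=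
  Finset.sum_Icc_succ_top hij h

theorem adjSum_ne_zero {h : ℕ → ℕ} (hpos : ∀ i, 0 < h i) {i j : ℕ} (hij : i ≤ j) :
    adjSum h i j ≠ 0 :=
  (Finset.sum_pos (fun t _ => hpos t) ⟨i, Finset.mem_Icc.mpr ⟨le_rfl, hij⟩⟩).ne'

theorem lam_mu_adjSum_general (h : ℕ → ℕ) (hpos : ∀ i, 0 < h i)
    (hap : Apart h) :
    ∀ i j, i ≤ j → lam (adjSum h i j) = lam (h i) ∧ mu (adjSum h i j) = mu (h j) := by
  intro i j hij
  induction j, hij using Nat.le_induction with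
  | base => simp [adjSum_self]
  | succ j hij ih =>
    have hsep : mu (adjSum h i j) < lam (h (j + 1)) := ih.2 ▸ hap j (j + 1) j.lt_succ_self
    rw [adjSum_succ h (hij.trans j.le_succ)]
    exact ⟨(lam_add_of_mu_lt_lam (adjSum_ne_zero hpos hij) hsep).trans ih.1,
      mu_add_of_mu_lt_lam hsep⟩

theorem lam_mu_adjSum (h : ℕ → ℕ) (hmono : StrictMono h) (hpos : ∀ i, 0 < h i)
    (hap : Apart h) :
    ∀ i j, i ≤ j → lam (adjSum h i j) = lam (h i) ∧ mu (adjSum h i j) = mu (h j) :=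
  lam_mu_adjSum_general h hpos hap
end

section
/- Ramsey's theorem for pairs and 2 colors implies the Adjacent Hindman Theorem for 2 colors: for every coloring c : ℕ → Fin 2, there exists a strictly increasing sequence h : ℕ → ℕ of positive naturals satisfying the apartness condition (for all i < j, μ(h i) < λ(h j)) and a color d : Fin 2 such that for all i ≤ j, c(h i + h (i+1) + ... + h j) = d. -/
/-!
Colour a pair of exponents `x < y` by `c (2 ^ y - 2 ^ x)` and let `e 0 < e 1 < ⋯` enumerate an
infinite homogeneous set. The binary numbers `h n = 2 ^ e (n + 1) - 2 ^ e n` are blocks of ones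
occupying the bits `e n, …, e (n + 1) - 1`, so they are apart, and the adjacent sum
`h i + ⋯ + h j` telescopes to `2 ^ e (j + 1) - 2 ^ e i`, whose colour is the homogeneous one.
-/

theorem two_pow_sub_two_pow_eq {a b : ℕ} (hab : a ≤ b) :
    2 ^ b - 2 ^ a = 2 ^ a * (2 ^ (b - a) - 1) := by
  rw [Nat.mul_sub_one, ← pow_add, Nat.add_sub_cancel' hab]

theorem lam_two_pow_sub_two_pow {a b : ℕ} (hab : a < b) : lam (2 ^ b - 2 ^ a) = a := by
  have hodd : ¬ 2 ∣ 2 ^ (b - a) - 1 := by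
    have heven : 2 ∣ 2 ^ (b - a) := dvd_pow_self 2 (by omega)
    have hpos : 0 < 2 ^ (b - a) := by positivity
    omega
  rw [lam, two_pow_sub_two_pow_eq hab.le, padicValNat.mul (by positivity) (by omega),
    padicValNat.prime_pow, padicValNat.eq_zero_of_not_dvd hodd, add_zero]

theorem mu_two_pow_sub_two_pow {a b : ℕ} (hab : a < b) : mu (2 ^ b - 2 ^ a) = b - 1 := by
  obtain ⟨c, rfl⟩ : ∃ c, b = c + 1 := ⟨b - 1, by omega⟩
  have hle : 2 ^ a ≤ 2 ^ c := Nat.pow_le_pow_right two_pos (by omega)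
  have hpos : 0 < 2 ^ a := by positivity
  rw [mu, Nat.add_sub_cancel]
  refine Nat.log_eq_of_pow_le_of_lt_pow ?_ ?_ <;> rw [pow_succ] <;> omega

theorem Apart.strictMono {h : ℕ → ℕ} (hapart : Apart h) (hpos : ∀ i, 0 < h i) :
    StrictMono h := fun i j hij =>
  calc h i < 2 ^ (mu (h i) + 1) := Nat.lt_pow_succ_log_self one_lt_two _
    _ ≤ 2 ^ lam (h j) := Nat.pow_le_pow_right two_pos (hapart i j hij)
    _ ≤ h j := Nat.le_of_dvd (hpos j) pow_padicValNat_dvd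

def twoPowGaps (e : ℕ → ℕ) (n : ℕ) : ℕ := 2 ^ e (n + 1) - 2 ^ e n

theorem adjSum_twoPowGaps {e : ℕ → ℕ} (he : Monotone e) {i j : ℕ} (hij : i ≤ j) :
    adjSum (twoPowGaps e) i j = 2 ^ e (j + 1) - 2 ^ e i := by
  have hpow : Monotone fun n => 2 ^ e n := fun _ _ hmn => Nat.pow_le_pow_right two_pos (he hmn)
  zify [hpow (show i ≤ j + 1 by omega)]
  rw [adjSum, Nat.cast_sum, ← Finset.sum_Icc_sub hij (fun n => (2 : ℤ) ^ e n)]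
  refine Finset.sum_congr rfl fun n _ => ?_
  rw [twoPowGaps, Nat.cast_sub (hpow n.le_succ)]
  push_cast
  rfl

theorem twoPowGaps_pos {e : ℕ → ℕ} (he : StrictMono e) (n : ℕ) : 0 < twoPowGaps e n :=
  Nat.sub_pos_of_lt (Nat.pow_lt_pow_right one_lt_two (he (Nat.lt_add_one n)))

theorem apart_twoPowGaps {e : ℕ → ℕ} (he : StrictMono e) : Apart (twoPowGaps e) := by
  intro i j hij
  rw [twoPowGaps, twoPowGaps, mu_two_pow_sub_two_pow (he (Nat.lt_add_one i)),
    lam_two_pow_sub_two_pow (he (Nat.lt_add_one j))]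
  have hi : e i < e (i + 1) := he (Nat.lt_add_one i)
  have hj : e (i + 1) ≤ e j := he.monotone hij
  omega

theorem rt22_implies_aht2
    (ramsey : ∀ f : ℕ → ℕ → Fin 2, ∃ J : Set ℕ, J.Infinite ∧
      ∃ d : Fin 2, ∀ x ∈ J, ∀ y ∈ J, x < y → f x y = d) :
    ∀ c : ℕ → Fin 2, ∃ h : ℕ → ℕ, StrictMono h ∧ (∀ i, 0 < h i) ∧ Apart h ∧
      ∃ d : Fin 2, ∀ i j, i ≤ j → c (adjSum h i j) = d := by
  intro c
  obtain ⟨J, hJ, d, hhom⟩ := ramsey fun x y => c (2 ^ y - 2 ^ x)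
  set e := Nat.nth (· ∈ J)
  have he : StrictMono e := Nat.nth_strictMono hJ
  have heJ (n : ℕ) : e n ∈ J := Nat.nth_mem_of_infinite hJ n
  refine ⟨twoPowGaps e, (apart_twoPowGaps he).strictMono (twoPowGaps_pos he),
    twoPowGaps_pos he, apart_twoPowGaps he, d, fun i j hij => ?_⟩
  rw [adjSum_twoPowGaps he.monotone hij]
  exact hhom _ (heJ i) _ (heJ (j + 1)) (he (by omega))
end

section
/- For every k and every f : ℕ → ℕ → Fin k, there exist infinite sets H₁, H₂ ⊆ ℕ and a color d such that f x₁ x₂ = d for all x₁ ∈ H₁, x₂ ∈ H₂ with x₁ < x₂ (the Increasing Polarized Ramsey Theorem for pairs, proved outright). -/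
/-
Fix a nonprincipal ultrafilter `U` on `ℕ`. For every `x`, one colour `c x` is taken by
`f x y` for `U`-almost all `y`, and one colour `d` is `c x` for `U`-almost all `x`. So
`f x y = d` for `U`-almost all `x` and `U`-almost all `y`; interleaving
`x₀ < y₀ < x₁ < y₁ < ⋯`, where `yⱼ` is chosen good for all good `x ≤ xⱼ` at once, gives the two
homogeneous sets.
-/

open Filter

theorem Ultrafilter.exists_eventually_eq {α β : Type*} [Finite β] (U : Ultrafilter α)
    (g : α → β) : ∃ b, ∀ᶠ a in U, g a = b := by
  obtain ⟨b, hb⟩ := (U.map g).eq_pure_of_finite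
  exact ⟨b, Ultrafilter.mem_map.1 (hb ▸ Ultrafilter.mem_pure.2 rfl : {b' | b' = b} ∈ U.map g)⟩

theorem Filter.Eventually.exists_gt_of_le_atTop {l : Filter ℕ} [l.NeBot] (hl : l ≤ atTop)
    {p : ℕ → Prop} (h : ∀ᶠ y in l, p y) (n : ℕ) : ∃ y, n < y ∧ p y :=
  (((eventually_gt_atTop n).filter_mono hl).and h).exists

theorem exists_infinite_forall_lt_of_eventually_eventually {l : Filter ℕ} [l.NeBot]
    (hl : l ≤ atTop) {R : ℕ → ℕ → Prop} (h : ∀ᶠ x in l, ∀ᶠ y in l, R x y) :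
    ∃ H₁ H₂ : Set ℕ, H₁.Infinite ∧ H₂.Infinite ∧ ∀ x ∈ H₁, ∀ y ∈ H₂, x < y → R x y := by
  set A := {x | ∀ᶠ y in l, R x y}
  have hgood : ∀ n, ∀ᶠ y in l, ∀ x ∈ A ∩ Set.Iic n, R x y := fun n =>
    (eventually_all_finite ((Set.finite_Iic n).inter_of_right A)).2 fun _ hx => hx.1
  choose a ha_gt ha_mem using h.exists_gt_of_le_atTop hl
  choose b hb_gt hb_mem using fun n => (hgood n).exists_gt_of_le_atTop hl n
  set x : ℕ → ℕ := fun j => (a ∘ b)^[j] (a 0)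
  have hx_succ : ∀ j, x (j + 1) = a (b (x j)) := fun j =>
    Function.iterate_succ_apply' (a ∘ b) j (a 0)
  have hbx_lt : ∀ j, b (x j) < x (j + 1) := fun j => hx_succ j ▸ ha_gt _
  have hx_mono : StrictMono x := strictMono_nat_of_lt_succ fun j => (hb_gt _).trans (hbx_lt j)
  have hbx_mono : StrictMono (b ∘ x) :=
    strictMono_nat_of_lt_succ fun j => (hbx_lt j).trans (hb_gt _)
  have hx_mem : ∀ i, x i ∈ A := by
    rintro (_ | i)
    · exact ha_mem 0
    · exact hx_succ i ▸ ha_mem _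
  refine ⟨Set.range x, Set.range (b ∘ x), Set.infinite_range_of_injective hx_mono.injective,
    Set.infinite_range_of_injective hbx_mono.injective, ?_⟩
  rintro _ ⟨i, rfl⟩ _ ⟨j, rfl⟩ hlt
  have hij : i ≤ j := by
    by_contra! hji
    exact (hlt.trans (hbx_lt j)).not_ge (hx_mono.monotone hji)
  exact hb_mem (x j) (x i) ⟨hx_mem i, hx_mono.monotone hij⟩

theorem increasing_polarized_ramsey (k : ℕ) (f : ℕ → ℕ → Fin k) :
    ∃ H₁ H₂ : Set ℕ, H₁.Infinite ∧ H₂.Infinite ∧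
      ∃ d : Fin k, ∀ x₁ ∈ H₁, ∀ x₂ ∈ H₂, x₁ < x₂ → f x₁ x₂ = d := by
  set U := hyperfilter ℕ
  choose c hc using fun x => U.exists_eventually_eq (f x)
  obtain ⟨d, hd⟩ := U.exists_eventually_eq c
  obtain ⟨H₁, H₂, hH₁, hH₂, hhom⟩ := exists_infinite_forall_lt_of_eventually_eventually
    (hyperfilter_le_cofinite.trans_eq Nat.cofinite_eq_atTop) (hd.mono fun x hx => hx ▸ hc x)
  exact ⟨H₁, H₂, hH₁, hH₂, d, hhom⟩
end
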